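/- arXiv:1210.5701 — 6 statements merged into one kernel-verified Lean document; each statement's English description precedes it below -/
import Mathlib

section
/- Let G be a nearly interval graph containing a blocking quadruple a,b,c,d. Then there is a labelling of the quadruple such that G contains an a-b path missed by c and d, an a-c path missed by b and d, and an a-d path missed by b and c; moreover every b-c path of G contains a neighbour of a or d, every b-d path contains a neighbour of a or c, and every c-d path contains a neighbour of a or b. -/
open SimpleGraph

variable {V : Type*}

def Misses (G : SimpleGraph V) (x : V) {a b : V} (p : G.Walk a b) : Prop :=
  x ∉ p.support ∧ ∀ y ∈ p.support, ¬ G.Adj x y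

def Avoids (G : SimpleGraph V) (x y z w : V) : Prop :=
  (∃ p : G.Walk x y, p.IsPath ∧ Misses G z p ∧ Misses G w p) ∨
  (∃ p : G.Walk z w, p.IsPath ∧ Misses G x p ∧ Misses G y p)

def IsBlockingQuadruple (G : SimpleGraph V) (x y z w : V) : Prop :=
  Avoids G x y z w ∧ Avoids G x z y w ∧ Avoids G x w y z

/-- `G` is an interval graph: the intersection graph of a family of intervals of the line. -/
def IsIntervalGraph (G : SimpleGraph V) : Prop :=
  ∃ s e : V → ℝ, ∀ u v : V, u ≠ v →
    (G.Adj u v ↔ (Set.Icc (s u) (e u) ∩ Set.Icc (s v) (e v)).Nonempty)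

/-- A graph is chordal if it has no induced cycle of length at least four. -/
def Chordal (G : SimpleGraph V) : Prop :=
  ∀ n : ℕ, 4 ≤ n → IsEmpty (SimpleGraph.cycleGraph n ↪g G)

/-- `G - N[v]` : the subgraph induced on the complement of the closed neighbourhood of `v`. -/
def delClosedNbhd (G : SimpleGraph V) (v : V) : SimpleGraph {u : V // u ≠ v ∧ ¬ G.Adj v u} :=
  G.induce {u : V | u ≠ v ∧ ¬ G.Adj v u}

def NearlyChordal (G : SimpleGraph V) : Prop := ∀ v : V, Chordal (delClosedNbhd G v)

def NearlyInterval (G : SimpleGraph V) : Prop := ∀ v : V, IsIntervalGraph (delClosedNbhd G v)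

/-! Three vertices pairwise joined by paths, each missed by the third vertex and by a fourth vertex
`w`, would form an asteroidal triple of the interval graph `G - N[w]`; this is impossible because a
walk missed by a vertex `m` stays on one side of the interval of `m`. Of the eight ways in which
the three avoidance relations of a blocking quadruple can hold, four are such forbidden triangles
and the other four are stars centred at one vertex `a`, which gives the labelling. A `b`–`c` path
with no neighbour of `a` or `d` would close the `a`–`b` and `a`–`c` paths of the star into another
forbidden triangle. -/

section

variable {G : SimpleGraph V} {a b c d u v w x y z : V}

theorem Misses.ne_start {p : G.Walk u v} (h : Misses G x p) : x ≠ u :=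
  fun hx => h.1 (hx ▸ p.start_mem_support)

theorem Misses.ne_end {p : G.Walk u v} (h : Misses G x p) : x ≠ v :=
  fun hx => h.1 (hx ▸ p.end_mem_support)

theorem Misses.reverse {p : G.Walk u v} (h : Misses G x p) : Misses G x p.reverse := by
  simpa only [Misses, Walk.support_reverse, List.mem_reverse] using h

theorem Misses.of_cons {p : G.Walk u v} {huw : G.Adj w u} (h : Misses G x (Walk.cons huw p)) :
    Misses G x p :=
  ⟨fun hx => h.1 (List.mem_cons_of_mem _ hx), fun y hy => h.2 y (List.mem_cons_of_mem _ hy)⟩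

theorem misses_of_forall_not_adj {p : G.Walk u v} (hxv : x ≠ v)
    (h : ∀ y ∈ p.support, ¬ G.Adj x y) : Misses G x p := by
  classical
  refine ⟨fun hx => ?_, h⟩
  set q := p.dropUntil x hx
  exact h q.snd (p.support_dropUntil_subset_support hx (q.getVert_mem_support 1))
    (q.adj_snd (Walk.not_nil_of_ne hxv))

theorem Misses.of_map {V' : Type*} {G' : SimpleGraph V'} (f : G ↪g G') {p : G.Walk u v}
    (h : Misses G' (f x) (p.map f.toHom)) : Misses G x p := by
  rw [Misses, Walk.support_map] at h
  exact ⟨fun hx => h.1 (List.mem_map_of_mem hx),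
    fun y hy hxy => h.2 (f y) (List.mem_map_of_mem hy) (f.map_adj_iff.2 hxy)⟩

def IsAsteroidalTriple (G : SimpleGraph V) (x y z : V) : Prop :=
  (∃ p : G.Walk x y, Misses G z p) ∧ (∃ p : G.Walk y z, Misses G x p) ∧
    (∃ p : G.Walk z x, Misses G y p)

theorem IsAsteroidalTriple.rotate (h : IsAsteroidalTriple G x y z) :
    IsAsteroidalTriple G y z x :=
  ⟨h.2.1, h.2.2, h.1⟩

def IsIntervalModel (G : SimpleGraph V) (s e : V → ℝ) : Prop :=
  ∀ u v : V, u ≠ v → (G.Adj u v ↔ (Set.Icc (s u) (e u) ∩ Set.Icc (s v) (e v)).Nonempty)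

namespace IsIntervalModel

variable {s e : V → ℝ} {m : V}

theorem le_of_adj (hG : IsIntervalModel G s e) (huv : G.Adj u v) :
    s u ≤ e u ∧ s u ≤ e v := by
  obtain ⟨t, ⟨hu, hu'⟩, -, hv⟩ := (hG u v huv.ne).1 huv
  exact ⟨hu.trans hu', hu.trans hv⟩

theorem le_of_walk (hG : IsIntervalModel G s e) (p : G.Walk u v) (huv : u ≠ v) : s u ≤ e u :=
  (hG.le_of_adj (p.adj_snd (Walk.not_nil_of_ne huv))).1

theorem adj_of_le (hG : IsIntervalModel G s e) (huv : u ≠ v) (hu : s u ≤ e u)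
    (hv : s v ≤ e v) (huv' : s u ≤ e v) (hvu : s v ≤ e u) : G.Adj u v :=
  (hG u v huv).2 ⟨max (s u) (s v), ⟨le_max_left _ _, max_le hu hvu⟩, le_max_right _ _,
    max_le huv' hv⟩

theorem lt_or_lt_of_not_adj (hG : IsIntervalModel G s e) (huv : u ≠ v) (hu : s u ≤ e u)
    (hv : s v ≤ e v) (h : ¬ G.Adj u v) : e u < s v ∨ e v < s u := by
  by_contra! hc
  exact h (hG.adj_of_le huv hu hv hc.2 hc.1)

theorem lt_of_misses_of_lt (hG : IsIntervalModel G s e) (hm : s m ≤ e m) {p : G.Walk u v}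
    (hp : Misses G m p) (hu : e u < s m) : e v < s m := by
  induction p with
  | nil => exact hu
  | @cons u w v huw q ih =>
    refine ih hp.of_cons ?_
    by_contra! hw
    obtain ⟨hw', hwu⟩ := hG.le_of_adj huw.symm
    exact hp.2 w (List.mem_cons_of_mem _ q.start_mem_support) <|
      hG.adj_of_le hp.of_cons.ne_start hm hw' hw (by linarith)

theorem false_of_isAsteroidalTriple_of_lt (hG : IsIntervalModel G s e)
    (h : IsAsteroidalTriple G u m v) (hm : e u < s m) (hv : e u < s v) : False := by
  obtain ⟨⟨pum, hvum⟩, ⟨pmv, -⟩, ⟨pvu, hmvu⟩⟩ := h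
  have hm' : s m ≤ e m := hG.le_of_walk pmv hvum.ne_end.symm
  have hv' : s v ≤ e v := hG.le_of_walk pvu hvum.ne_start
  have hvm : e v < s m := hG.lt_of_misses_of_lt hm' hmvu.reverse hm
  have hmv : e m < s v := hG.lt_of_misses_of_lt hv' hvum hv
  linarith

theorem not_isAsteroidalTriple (hG : IsIntervalModel G s e) : ¬ IsAsteroidalTriple G x y z := by
  intro h
  have ⟨⟨pxy, hz⟩, ⟨pyz, hx⟩, ⟨pzx, hy⟩⟩ := h
  have hx' : s x ≤ e x := hG.le_of_walk pxy hx.ne_start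
  have hy' : s y ≤ e y := hG.le_of_walk pyz hy.ne_start
  have hz' : s z ≤ e z := hG.le_of_walk pzx hz.ne_start
  have hxy := hG.lt_or_lt_of_not_adj hx.ne_start hx' hy' (hx.2 y pyz.start_mem_support)
  have hxz := hG.lt_or_lt_of_not_adj hx.ne_end hx' hz' (hx.2 z pyz.end_mem_support)
  have hyz := hG.lt_or_lt_of_not_adj hy.ne_start hy' hz' (hy.2 z pzx.start_mem_support)
  -- rotate the triple so that the vertex with the leftmost interval comes first
  rcases hxy with hxy | hyx
  · rcases hxz with hxz | hzx
    · exact hG.false_of_isAsteroidalTriple_of_lt h hxy hxz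
    · exact hG.false_of_isAsteroidalTriple_of_lt h.rotate.rotate hzx (by linarith)
  · rcases hyz with hyz | hzy
    · exact hG.false_of_isAsteroidalTriple_of_lt h.rotate hyz hyx
    · exact hG.false_of_isAsteroidalTriple_of_lt h.rotate.rotate (by linarith) hzy

end IsIntervalModel

theorem IsIntervalGraph.not_isAsteroidalTriple (hG : IsIntervalGraph G) :
    ¬ IsAsteroidalTriple G x y z :=
  let ⟨_, _, hse⟩ := hG
  IsIntervalModel.not_isAsteroidalTriple hse

def HasMissedPath (G : SimpleGraph V) (x y z w : V) : Prop :=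
  ∃ p : G.Walk x y, p.IsPath ∧ Misses G z p ∧ Misses G w p

theorem HasMissedPath.symm (h : HasMissedPath G x y z w) : HasMissedPath G y x z w :=
  let ⟨p, hp, hz, hw⟩ := h
  ⟨p.reverse, hp.reverse, hz.reverse, hw.reverse⟩

theorem HasMissedPath.swap (h : HasMissedPath G x y z w) : HasMissedPath G x y w z :=
  let ⟨p, hp, hz, hw⟩ := h
  ⟨p, hp, hw, hz⟩

theorem Avoids.hasMissedPath_or (h : Avoids G x y z w) :
    HasMissedPath G x y z w ∨ HasMissedPath G z w x y :=
  h

theorem Misses.induce {s : Set V} {p : G.Walk u v} (hs : ∀ t ∈ p.support, t ∈ s)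
    (hz : Misses G z p) (hzs : z ∈ s) : Misses (G.induce s) ⟨z, hzs⟩ (p.induce s hs) :=
  Misses.of_map (Embedding.induce s) (by rwa [Walk.map_induce])

theorem Misses.mem_delClosedNbhd {p : G.Walk u v} (hw : Misses G w p) :
    ∀ t ∈ p.support, t ∈ {u : V | u ≠ w ∧ ¬ G.Adj w u} :=
  fun t ht => ⟨fun h => hw.1 (h ▸ ht), hw.2 t ht⟩

theorem NearlyInterval.not_triangle (hni : NearlyInterval G) (hxy : HasMissedPath G x y z w)
    (hyz : HasMissedPath G y z x w) (hzx : HasMissedPath G z x y w) : False := by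
  obtain ⟨pxy, -, hzxy, hwxy⟩ := hxy
  obtain ⟨pyz, -, hxyz, hwyz⟩ := hyz
  obtain ⟨pzx, -, hyzx, hwzx⟩ := hzx
  exact (hni w).not_isAsteroidalTriple
    ⟨⟨_, hzxy.induce hwxy.mem_delClosedNbhd (hwzx.mem_delClosedNbhd z pzx.start_mem_support)⟩,
      ⟨_, hxyz.induce hwyz.mem_delClosedNbhd (hwxy.mem_delClosedNbhd x pxy.start_mem_support)⟩,
      ⟨_, hyzx.induce hwzx.mem_delClosedNbhd (hwyz.mem_delClosedNbhd y pyz.start_mem_support)⟩⟩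

theorem NearlyInterval.exists_adj_of_isPath (hni : NearlyInterval G)
    (hab : HasMissedPath G a b c d) (hac : HasMissedPath G a c b d) (p : G.Walk b c)
    (hp : p.IsPath) : ∃ x ∈ p.support, G.Adj a x ∨ G.Adj d x := by
  by_contra! h
  have hane : a ≠ c := let ⟨_, _, hc, _⟩ := hab; hc.ne_start.symm
  have hdne : d ≠ c := let ⟨_, _, _, hd⟩ := hac; hd.ne_end
  have hbc : HasMissedPath G b c a d := ⟨p, hp,
    misses_of_forall_not_adj hane fun x hx => (h x hx).1,
    misses_of_forall_not_adj hdne fun x hx => (h x hx).2⟩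
  exact hni.not_triangle hab hbc hac.symm

def IsStar (G : SimpleGraph V) (a b c d : V) : Prop :=
  HasMissedPath G a b c d ∧ HasMissedPath G a c b d ∧ HasMissedPath G a d b c

theorem NearlyInterval.exists_isStar (hni : NearlyInterval G)
    (h : IsBlockingQuadruple G a b c d) :
    ∃ a' b' c' d' : V, ({a', b', c', d'} : Set V) = {a, b, c, d} ∧ IsStar G a' b' c' d' := by
  obtain ⟨h1, h2, h3⟩ := h
  rcases h1.hasMissedPath_or with hab | hcd <;> rcases h2.hasMissedPath_or with hac | hbd <;>
    rcases h3.hasMissedPath_or with had | hbc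
  · exact ⟨a, b, c, d, rfl, hab, hac, had⟩
  · exact (hni.not_triangle hab hbc hac.symm).elim
  · exact (hni.not_triangle hab.swap hbd had.symm).elim
  · exact ⟨b, a, c, d, Set.insert_comm _ _ _, hab.symm, hbc, hbd⟩
  · exact (hni.not_triangle hac.swap hcd had.symm.swap).elim
  · refine ⟨c, a, b, d, ?_, hac.symm, hbc.symm, hcd⟩
    ext; simp only [Set.mem_insert_iff, Set.mem_singleton_iff]; tauto
  · refine ⟨d, a, b, c, ?_, had.symm, hbd.symm, hcd.symm⟩
    ext; simp only [Set.mem_insert_iff, Set.mem_singleton_iff]; tauto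
  · exact (hni.not_triangle hbc.swap hcd.swap hbd.symm.swap).elim

end

theorem nearlyInterval_blocking_quadruple_structure_general (G : SimpleGraph V)
    (hni : NearlyInterval G) (a b c d : V) (hbq : IsBlockingQuadruple G a b c d) :
    ∃ a' b' c' d' : V, ({a', b', c', d'} : Set V) = ({a, b, c, d} : Set V) ∧
      (∃ p : G.Walk a' b', p.IsPath ∧ Misses G c' p ∧ Misses G d' p) ∧
      (∃ p : G.Walk a' c', p.IsPath ∧ Misses G b' p ∧ Misses G d' p) ∧
      (∃ p : G.Walk a' d', p.IsPath ∧ Misses G b' p ∧ Misses G c' p) ∧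
      (∀ p : G.Walk b' c', p.IsPath → ∃ x ∈ p.support, G.Adj a' x ∨ G.Adj d' x) ∧
      (∀ p : G.Walk b' d', p.IsPath → ∃ x ∈ p.support, G.Adj a' x ∨ G.Adj c' x) ∧
      (∀ p : G.Walk c' d', p.IsPath → ∃ x ∈ p.support, G.Adj a' x ∨ G.Adj b' x) := by
  obtain ⟨a', b', c', d', hset, hab, hac, had⟩ := hni.exists_isStar hbq
  exact ⟨a', b', c', d', hset, hab, hac, had, hni.exists_adj_of_isPath hab hac,
    hni.exists_adj_of_isPath hab.swap had, hni.exists_adj_of_isPath hac.swap had.swap⟩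

/-- In a nearly interval graph, a blocking quadruple can be relabelled
`a, b, c, d` so that there are `a–b`, `a–c`, `a–d` paths missed by the other two
vertices, and every `b–c`, `b–d`, `c–d` path contains a neighbour of one of the
remaining two vertices (namely of `a` or of the fourth vertex). -/
theorem nearlyInterval_blocking_quadruple_structure [Fintype V] (G : SimpleGraph V)
    (hni : NearlyInterval G) (a b c d : V) (hbq : IsBlockingQuadruple G a b c d) :
    ∃ a' b' c' d' : V, ({a', b', c', d'} : Set V) = ({a, b, c, d} : Set V) ∧
      (∃ p : G.Walk a' b', p.IsPath ∧ Misses G c' p ∧ Misses G d' p) ∧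
      (∃ p : G.Walk a' c', p.IsPath ∧ Misses G b' p ∧ Misses G d' p) ∧
      (∃ p : G.Walk a' d', p.IsPath ∧ Misses G b' p ∧ Misses G c' p) ∧
      (∀ p : G.Walk b' c', p.IsPath → ∃ x ∈ p.support, G.Adj a' x ∨ G.Adj d' x) ∧
      (∀ p : G.Walk b' d', p.IsPath → ∃ x ∈ p.support, G.Adj a' x ∨ G.Adj c' x) ∧
      (∀ p : G.Walk c' d', p.IsPath → ∃ x ∈ p.support, G.Adj a' x ∨ G.Adj b' x) :=
  nearlyInterval_blocking_quadruple_structure_general G hni a b c d hbq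
end

section
/- If Q is a clique cover of a chordal graph G consisting of maximal cliques, and T is a clique tree of G, then every leaf of T belongs to Q. -/
open SimpleGraph

variable {V : Type*}

/-- `C` is a maximal clique of `G`. -/
def IsMaxClique (G : SimpleGraph V) (C : Set V) : Prop :=
  G.IsClique C ∧ ∀ D : Set V, G.IsClique D → C ⊆ D → D = C

/-- A clique tree of a chordal graph `G`: a tree on the maximal cliques of `G`
such that for every vertex `v` of `G` the maximal cliques containing `v` induce
a (connected) subtree. -/
def IsCliqueTree (G : SimpleGraph V) (T : SimpleGraph {C : Set V // IsMaxClique G C}) : Prop :=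
  T.IsTree ∧ ∀ v : V, (T.induce {C : {C : Set V // IsMaxClique G C} | v ∈ (C : Set V)}).Connected

/-- A leaf of a tree: a vertex with exactly one neighbour. -/
def IsTreeLeaf {α : Type*} (T : SimpleGraph α) (C : α) : Prop := ∃! C', T.Adj C C'

/-!
A leaf `C` of a clique tree is not contained in its unique neighbour `C'`, by maximality, so some
vertex `v` lies in `C` but not in `C'`. The cliques containing `v` form a subtree through `C`; any
other clique in it would force a tree edge out of `C` inside that subtree, i.e. the edge to `C'`.
So `C` is the only maximal clique containing `v`, and a cover must use it.
-/

lemma SimpleGraph.exists_adj_mem_of_induce_preconnected {α : Type*} {T : SimpleGraph α}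
    {s : Set α} (hs : (T.induce s).Preconnected) {a b : α} (ha : a ∈ s) (hb : b ∈ s)
    (hab : a ≠ b) : ∃ c ∈ s, T.Adj a c := by
  obtain ⟨p⟩ := hs ⟨a, ha⟩ ⟨b, hb⟩
  have hp : ¬ p.Nil := Walk.not_nil_of_ne (by simpa using hab)
  exact ⟨p.snd, p.snd.2, by simpa using Walk.adj_snd hp⟩

lemma IsMaxClique.exists_mem_notMem_of_ne {G : SimpleGraph V} {C D : Set V}
    (hC : IsMaxClique G C) (hD : G.IsClique D) (hne : D ≠ C) : ∃ v ∈ C, v ∉ D :=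
  Set.not_subset.mp fun hCD => hne (hC.2 D hD hCD)

lemma IsCliqueTree.eq_of_mem_of_forall_adj_notMem {G : SimpleGraph V}
    {T : SimpleGraph {C : Set V // IsMaxClique G C}} (hT : IsCliqueTree G T)
    {C D : {C : Set V // IsMaxClique G C}} {v : V} (hvC : v ∈ (C : Set V))
    (hv : ∀ C', T.Adj C C' → v ∉ (C' : Set V)) (hvD : v ∈ (D : Set V)) : D = C := by
  by_contra hDC
  obtain ⟨C', hvC', hadj⟩ :=
    exists_adj_mem_of_induce_preconnected (hT.2 v).preconnected hvC hvD (Ne.symm hDC)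
  exact hv C' hadj hvC'

theorem cliqueTree_leaf_mem_cliqueCover_general (G : SimpleGraph V)
    (Q : Set {C : Set V // IsMaxClique G C}) (hQ : ∀ v : V, ∃ C ∈ Q, v ∈ (C : Set V))
    (T : SimpleGraph {C : Set V // IsMaxClique G C}) (hT : IsCliqueTree G T)
    (C : {C : Set V // IsMaxClique G C}) (hC : IsTreeLeaf T C) : C ∈ Q := by
  obtain ⟨C', hadj, hC'_unique⟩ := hC
  obtain ⟨v, hvC, hvC'⟩ :=
    C.2.exists_mem_notMem_of_ne C'.2.1 (Subtype.coe_injective.ne hadj.ne.symm)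
  obtain ⟨D, hDQ, hvD⟩ := hQ v
  have hDC : D = C :=
    hT.eq_of_mem_of_forall_adj_notMem hvC (fun C'' h => hC'_unique C'' h ▸ hvC') hvD
  exact hDC ▸ hDQ

/-- Every leaf of a clique tree belongs to any clique cover by
maximal cliques. -/
theorem cliqueTree_leaf_mem_cliqueCover [Fintype V] (G : SimpleGraph V) (hG : Chordal G)
    (Q : Set {C : Set V // IsMaxClique G C}) (hQ : ∀ v : V, ∃ C ∈ Q, v ∈ (C : Set V))
    (T : SimpleGraph {C : Set V // IsMaxClique G C}) (hT : IsCliqueTree G T)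
    (C : {C : Set V // IsMaxClique G C}) (hC : IsTreeLeaf T C) : C ∈ Q :=
  cliqueTree_leaf_mem_cliqueCover_general G Q hQ T hT C hC
end

section
/- Let T be a clique tree of a chordal graph G, let A = A_0, A_1, ..., A_{k-1}, A_0 be an Euler tour of T (viewed as a symmetric digraph), and let u be a vertex of G. If u ∈ A_i and u ∈ A_j, the circular segment A(i,j) (the cliques strictly between positions i and j in the tour) is nonempty, and u belongs to no clique occurring in A(i,j), then A_i = A_j. -/
/-!
Suppose `A_i ≠ A_j`. The tour segment from position `i` to position `j` is a walk in the
tree `T` from `A_i` to `A_j`, so it contains every edge of the unique path from `A_i` to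
`A_j`. Since the cliques containing `u` induce a subtree, this path starts with an edge
`A_i X` where `u ∈ X`. That edge is traversed at some step `n → n + 1` of the segment, so
`u` lies in both cliques visited at that step; as the gap has at least one position, one of
them is strictly inside the gap, a contradiction.
-/

open SimpleGraph

variable {V : Type*}

/-- An Euler tour `A_0, A_1, …, A_{k-1}, A_0` of the tree `T` viewed as a symmetric
digraph: a closed walk traversing each directed arc exactly once and visiting every
vertex.  (The degenerate disjunct permits the constant tour on a single-vertex tree.) -/
def IsEulerTour {α : Type*} (T : SimpleGraph α) (k : ℕ) (A : ZMod k → α) : Prop :=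
  0 < k ∧ Function.Surjective A ∧
  (∀ i : ZMod k, T.Adj (A i) (A (i + 1)) ∨ (A i = A (i + 1) ∧ ∀ a b : α, ¬ T.Adj a b)) ∧
  (∀ a b : α, T.Adj a b → ∃! i : ZMod k, A i = a ∧ A (i + 1) = b)

/-- The set of positions strictly between position `i` and position `j` in the cyclic
order on `ZMod k` (the positions of the circular subsequence `A(i,j)`). -/
def cyclicBetween (k : ℕ) (i j : ZMod k) : Set (ZMod k) :=
  {t : ZMod k | ∃ m : ℕ, 0 < m ∧ m < (j - i).val ∧ t = i + (m : ZMod k)}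

namespace SimpleGraph

variable {α : Type*} {T : SimpleGraph α}

lemma IsAcyclic.edges_subset_of_isPath (hT : T.IsAcyclic) {a b : α} {p : T.Walk a b}
    (hp : p.IsPath) (W : T.Walk a b) : p.edges ⊆ W.edges := by
  classical
  have hpW : p = W.bypass :=
    congrArg Subtype.val ((hT.subsingleton_path a b).elim ⟨p, hp⟩ ⟨W.bypass, W.bypass_isPath⟩)
  rw [hpW]
  exact W.edges_bypass_subset_edges

lemma exists_isPath_support_subset_of_preconnected_induce {s : Set α}
    (hs : (T.induce s).Preconnected) {a b : α} (ha : a ∈ s) (hb : b ∈ s) :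
    ∃ p : T.Walk a b, p.IsPath ∧ ∀ x ∈ p.support, x ∈ s := by
  classical
  obtain ⟨w⟩ := hs ⟨a, ha⟩ ⟨b, hb⟩
  let w' := w.map (Embedding.induce s).toHom
  have hw' : ∀ x ∈ w'.support, x ∈ s := by
    intro x hx
    rw [Walk.support_map, List.mem_map] at hx
    obtain ⟨y, -, rfl⟩ := hx
    exact y.2
  exact ⟨w'.bypass, w'.bypass_isPath, fun x hx => hw' x (w'.support_bypass_subset_support hx)⟩

lemma IsAcyclic.exists_mem_edges_of_preconnected_induce (hT : T.IsAcyclic) {s : Set α}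
    (hs : (T.induce s).Preconnected) {a b : α} (ha : a ∈ s) (hb : b ∈ s) (hab : a ≠ b)
    (W : T.Walk a b) : ∃ x ∈ s, s(a, x) ∈ W.edges := by
  obtain ⟨p, hp, hps⟩ := exists_isPath_support_subset_of_preconnected_induce hs ha hb
  have hnil : ¬ p.Nil := Walk.not_nil_of_ne hab
  exact ⟨p.snd, hps _ (p.snd_mem_support_of_mem_edges (Walk.mk_start_snd_mem_edges hnil)),
    hT.edges_subset_of_isPath hp W (Walk.mk_start_snd_mem_edges hnil)⟩

lemma exists_walk_of_adj_succ (f : ℕ → α) (m : ℕ) (hf : ∀ n < m, T.Adj (f n) (f (n + 1))) :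
    ∃ W : T.Walk (f 0) (f m), ∀ e ∈ W.edges, ∃ n < m, e = s(f n, f (n + 1)) := by
  induction m with
  | zero => exact ⟨Walk.nil, by simp⟩
  | succ m ih =>
    obtain ⟨W, hW⟩ := ih fun n hn => hf n (Nat.lt_succ_of_lt hn)
    refine ⟨W.concat (hf m (Nat.lt_succ_self m)), fun e he => ?_⟩
    rw [Walk.edges_concat, List.concat_eq_append, List.mem_append, List.mem_singleton] at he
    rcases he with he | rfl
    · obtain ⟨n, hn, rfl⟩ := hW e he
      exact ⟨n, Nat.lt_succ_of_lt hn, rfl⟩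
    · exact ⟨m, Nat.lt_succ_self m, rfl⟩

lemma exists_walk_of_adj_add_one {k : ℕ} [NeZero k] {A : ZMod k → α}
    (hA : ∀ t, T.Adj (A t) (A (t + 1))) (i j : ZMod k) :
    ∃ W : T.Walk (A i) (A j), ∀ e ∈ W.edges,
      ∃ n < (j - i).val, e = s(A (i + n), A (i + n + 1)) := by
  have hend : A (i + ((j - i).val : ℕ)) = A j := by
    rw [ZMod.natCast_zmod_val, add_sub_cancel]
  obtain ⟨W, hW⟩ := exists_walk_of_adj_succ (fun n : ℕ => A (i + n)) (j - i).val
    fun n _ => by simpa [add_assoc] using hA (i + n)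
  refine ⟨W.copy (by simp) hend, fun e he => ?_⟩
  rw [Walk.edges_copy] at he
  obtain ⟨n, hn, rfl⟩ := hW e he
  exact ⟨n, hn, by push_cast; rw [add_assoc]⟩

end SimpleGraph

lemma IsEulerTour.adj_add_one {α : Type*} {T : SimpleGraph α} {k : ℕ} {A : ZMod k → α}
    (hA : IsEulerTour T k A) {a b : α} (hab : T.Adj a b) (t : ZMod k) :
    T.Adj (A t) (A (t + 1)) :=
  (hA.2.2.1 t).resolve_right fun h => h.2 a b hab

lemma add_mem_cyclicBetween_or_add_one_mem {k : ℕ} {i j : ZMod k}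
    (hne : (cyclicBetween k i j).Nonempty) {n : ℕ} (hn : n < (j - i).val) :
    i + n ∈ cyclicBetween k i j ∨ i + n + 1 ∈ cyclicBetween k i j := by
  obtain ⟨-, m, hm, hmj, -⟩ := hne
  rcases Nat.eq_zero_or_pos n with rfl | hn0
  · exact Or.inr ⟨1, one_pos, by omega, by simp⟩
  · exact Or.inl ⟨n, hn0, hn, rfl⟩

theorem eulerTour_gap_endpoints_eq_general (G : SimpleGraph V)
    (T : SimpleGraph {C : Set V // IsMaxClique G C}) (hT : IsCliqueTree G T)
    (k : ℕ) (A : ZMod k → {C : Set V // IsMaxClique G C}) (hA : IsEulerTour T k A)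
    (u : V) (i j : ZMod k) (hi : u ∈ (A i : Set V)) (hj : u ∈ (A j : Set V))
    (hne : (cyclicBetween k i j).Nonempty)
    (hno : ∀ t ∈ cyclicBetween k i j, u ∉ (A t : Set V)) : A i = A j := by
  by_contra hij
  have : NeZero k := ⟨hA.1.ne'⟩
  have hadj : T.Adj (A i) _ :=
    (hT.1.connected.preconnected (A i) (A j)).some.adj_snd (Walk.not_nil_of_ne hij)
  obtain ⟨W, hW⟩ := exists_walk_of_adj_add_one (hA.adj_add_one hadj) i j
  obtain ⟨X, hX, hXW⟩ :=
    hT.1.isAcyclic.exists_mem_edges_of_preconnected_induce (hT.2 u).preconnected hi hj hij W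
  obtain ⟨n, hn, hedge⟩ := hW _ hXW
  have hu : ∀ Y ∈ s(A i, X), u ∈ (Y : Set V) := by
    simp only [Sym2.mem_iff, forall_eq_or_imp, forall_eq]
    exact ⟨hi, hX⟩
  rw [hedge] at hu
  rcases add_mem_cyclicBetween_or_add_one_mem hne hn with h | h
  · exact hno _ h (hu _ (Sym2.mem_mk_left _ _))
  · exact hno _ h (hu _ (Sym2.mem_mk_right _ _))

/-- If `u ∈ A_i`, `u ∈ A_j`, the circular segment `A(i,j)` is nonempty
and `u` lies in no clique occurring there, then `A_i = A_j`. -/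
theorem eulerTour_gap_endpoints_eq [Fintype V] (G : SimpleGraph V) (hG : Chordal G)
    (T : SimpleGraph {C : Set V // IsMaxClique G C}) (hT : IsCliqueTree G T)
    (k : ℕ) (A : ZMod k → {C : Set V // IsMaxClique G C}) (hA : IsEulerTour T k A)
    (u : V) (i j : ZMod k) (hi : u ∈ (A i : Set V)) (hj : u ∈ (A j : Set V))
    (hne : (cyclicBetween k i j).Nonempty)
    (hno : ∀ t ∈ cyclicBetween k i j, u ∉ (A t : Set V)) : A i = A j :=
  eulerTour_gap_endpoints_eq_general G T hT k A hA u i j hi hj hne hno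
end

section
/- Let T be a clique tree of a chordal graph G, let A = A_0,...,A_{k-1},A_0 be an Euler tour of T, and let u be a vertex of G with u ∈ A_i = A_j, A(i,j) nonempty, and u in no clique occurring in A(i,j). Then at least one of the cliques occurring in A(i,j) is a leaf of T. -/
open SimpleGraph

variable {V : Type*}

/-!
Removing an edge `{a, b}` of a tree separates `a` from `b`, so an Euler tour that leaves `a`
for `b` can come back to `a` only by first crossing the reverse arc `b → a`. Hence, if the
tour leaves `A_i` and returns to it at `A_j`, the reverse arc of the first step lies in
`A(i,j)` and bounds a shorter excursion from `A_{i+1}` back to itself, unless the tour turns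
back immediately; by induction on the length of the excursion, some excursion has the form
`a → b → a`, and then `b` is a leaf since the tour cannot return along `b → a` before
having explored everything behind `b`.
-/

variable {α : Type*}

lemma SimpleGraph.reachable_deleteEdges_of_chain {H : SimpleGraph α} {B : ℕ → α} {e : Sym2 α}
    {a b : ℕ} (hab : a ≤ b)
    (h : ∀ n, a ≤ n → n < b → H.Adj (B n) (B (n + 1)) ∧ s(B n, B (n + 1)) ≠ e) :
    (H.deleteEdges {e}).Reachable (B a) (B b) := by
  induction b, hab using Nat.le_induction with
  | base => rfl
  | succ b hab ih =>
    obtain ⟨hadj, hne⟩ := h b hab b.lt_succ_self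
    exact (ih fun n h₁ h₂ => h n h₁ (by omega)).trans
      (deleteEdges_adj.mpr ⟨hadj, by simpa using hne⟩).reachable

/-- An Euler tour of `T` read off from a fixed starting position, indexed by `ℕ` so that
positions are linearly ordered: `B 0, …, B k` traverses every arc of `T` exactly once. -/
structure IsEulerArcWalk (T : SimpleGraph α) (k : ℕ) (B : ℕ → α) : Prop where
  adj : ∀ n < k, T.Adj (B n) (B (n + 1))
  arc_injective : ∀ m < k, ∀ n < k, B m = B n → B (m + 1) = B (n + 1) → m = n
  exists_arc : ∀ a b, T.Adj a b → ∃ n < k, B n = a ∧ B (n + 1) = b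

namespace IsEulerArcWalk

variable {T : SimpleGraph α} {k : ℕ} {B : ℕ → α}

lemma reachable_deleteEdges (hB : IsEulerArcWalk T k B) {p s a b : ℕ} (hp : p < k)
    (hs : s < k) (hsp : B s = B (p + 1)) (hsp' : B (s + 1) = B p) (hab : a ≤ b) (hbk : b ≤ k)
    (havoid : ∀ n, a ≤ n → n < b → n ≠ p ∧ n ≠ s) :
    (T.deleteEdges {s(B p, B (p + 1))}).Reachable (B a) (B b) := by
  refine reachable_deleteEdges_of_chain hab fun n han hnb => ⟨hB.adj n (by omega), ?_⟩
  obtain ⟨hnp, hns⟩ := havoid n han hnb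
  intro he
  rcases Sym2.eq_iff.mp he with ⟨h₁, h₂⟩ | ⟨h₁, h₂⟩
  · exact hnp (hB.arc_injective n (by omega) p hp h₁ h₂)
  · exact hns (hB.arc_injective n (by omega) s hs (h₁.trans hsp.symm) (h₂.trans hsp'.symm))

lemma isTreeLeaf_of_backtrack (hT : T.IsAcyclic) (hB : IsEulerArcWalk T k B) {p : ℕ}
    (hpk : p + 1 < k) (hback : B (p + 2) = B p) : IsTreeLeaf T (B (p + 1)) := by
  have hadj := hB.adj p (by omega)
  have hbridge := isBridge_iff.mp (isAcyclic_iff_forall_adj_isBridge.mp hT hadj)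
  have reach := fun a b => hB.reachable_deleteEdges (by omega) hpk rfl hback (a := a) (b := b)
  refine ⟨B p, hadj.symm, fun y hy => ?_⟩
  obtain ⟨q, hqk, hq, hqy⟩ := hB.exists_arc _ _ hy
  rcases lt_trichotomy q (p + 1) with hlt | rfl | hgt
  · have hqp : q ≠ p := by rintro rfl; exact hadj.ne hq
    refine absurd ?_ hbridge
    simpa [hq] using (reach q p (by omega) (by omega) fun n _ _ => ⟨by omega, by omega⟩).symm
  · rw [← hqy, hback]
  · refine absurd ?_ hbridge
    simpa [hq, hback] using reach (p + 2) q (by omega) hqk.le fun n _ _ => ⟨by omega, by omega⟩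

lemma exists_isTreeLeaf_between (hT : T.IsAcyclic) (hB : IsEulerArcWalk T k B) {p d : ℕ}
    (hd : 0 < d) (hpd : p + d ≤ k) (hret : B p = B (p + d)) :
    ∃ m, p < m ∧ m < p + d ∧ IsTreeLeaf T (B m) := by
  induction d using Nat.strong_induction_on generalizing p with
  | _ d ih =>
  have hadj := hB.adj p (by omega)
  have hbridge := isBridge_iff.mp (isAcyclic_iff_forall_adj_isBridge.mp hT hadj)
  obtain ⟨s, hsk, hsp, hsp'⟩ := hB.exists_arc _ _ hadj.symm
  have hs : p < s ∧ s < p + d := by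
    by_contra hs
    refine hbridge ?_
    have := hB.reachable_deleteEdges (by omega) hsk hsp hsp' (a := p + 1) (by omega) hpd
      fun n _ _ => ⟨by omega, by omega⟩
    rwa [← hret, reachable_comm] at this
  rcases Nat.lt_or_ge (p + 1) s with hlt | hle
  · obtain ⟨m, hm₁, hm₂, hleaf⟩ := ih (s - (p + 1)) (by omega) (p := p + 1) (by omega)
      (by omega) (by rw [hsp.symm]; congr 1; omega)
    exact ⟨m, by omega, by omega, hleaf⟩
  · obtain rfl : s = p + 1 := by omega
    rcases eq_or_ne d 2 with rfl | hd2
    · exact ⟨p + 1, by omega, by omega, hB.isTreeLeaf_of_backtrack hT hsk hsp'⟩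
    · obtain ⟨m, hm₁, hm₂, hleaf⟩ := ih (d - 2) (by omega) (p := p + 2) (by omega)
        (by omega) (by rw [hsp', hret]; congr 1; omega)
      exact ⟨m, by omega, by omega, hleaf⟩

end IsEulerArcWalk

namespace IsEulerTour

variable {T : SimpleGraph α} {k : ℕ} {A : ZMod k → α}

lemma isEulerArcWalk (hA : IsEulerTour T k A) (hT : ∃ a b, T.Adj a b) (i : ZMod k) :
    IsEulerArcWalk T k (fun n => A (i + n)) := by
  have : NeZero k := ⟨hA.1.ne'⟩
  obtain ⟨-, -, hstep, harc⟩ := hA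
  have hadj (n : ℕ) : T.Adj (A (i + n)) (A (i + n + 1)) := by
    obtain ⟨a, b, hab⟩ := hT
    exact (hstep (i + n)).resolve_right fun h => h.2 a b hab
  refine ⟨fun n _ => by simpa [add_assoc] using hadj n, fun m hm n hn h₁ h₂ => ?_,
    fun a b hab => ?_⟩
  · obtain ⟨t, -, ht⟩ := harc _ _ (hadj m)
    have h₂' : A (i + n + 1) = A (i + m + 1) := by simpa [add_assoc] using h₂.symm
    have hmn : ((m : ℕ) : ZMod k) = n := by
      simpa using (ht (i + m) ⟨rfl, rfl⟩).trans (ht (i + n) ⟨h₁.symm, h₂'⟩).symm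
    rwa [ZMod.natCast_eq_natCast_iff', Nat.mod_eq_of_lt hm, Nat.mod_eq_of_lt hn] at hmn
  · obtain ⟨t, ⟨ht₁, ht₂⟩, -⟩ := harc a b hab
    exact ⟨(t - i).val, ZMod.val_lt _, by simp [ht₁], by simp [← add_assoc, ht₂]⟩

lemma apply_add_natCast (hA : IsEulerTour T k A) (hT : ∀ a b, ¬ T.Adj a b) (i : ZMod k)
    (n : ℕ) : A (i + n) = A i := by
  induction n with
  | zero => simp
  | succ n ih =>
    rw [Nat.cast_succ, ← add_assoc, ← ((hA.2.2.1 (i + n)).resolve_left (hT _ _)).1, ih]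

end IsEulerTour

theorem eulerTour_gap_contains_leaf_general (G : SimpleGraph V)
    (T : SimpleGraph {C : Set V // IsMaxClique G C}) (hT : IsCliqueTree G T)
    (k : ℕ) (A : ZMod k → {C : Set V // IsMaxClique G C}) (hA : IsEulerTour T k A)
    (u : V) (i j : ZMod k) (hi : u ∈ (A i : Set V))
    (hij : A i = A j) (hne : (cyclicBetween k i j).Nonempty)
    (hno : ∀ t ∈ cyclicBetween k i j, u ∉ (A t : Set V)) :
    ∃ t ∈ cyclicBetween k i j, IsTreeLeaf T (A t) := by
  have : NeZero k := ⟨hA.1.ne'⟩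
  obtain ⟨t, m, hm₀, hmd, rfl⟩ := hne
  by_cases hedge : ∃ a b, T.Adj a b
  · obtain ⟨m', hm'₀, hm'd, hleaf⟩ :=
      (hA.isEulerArcWalk hedge i).exists_isTreeLeaf_between hT.1.isAcyclic (p := 0)
        (d := (j - i).val) (by omega) (by simpa using (ZMod.val_lt (j - i)).le)
        (by simp [hij])
    exact ⟨i + m', ⟨m', hm'₀, by simpa using hm'd, rfl⟩, hleaf⟩
  · push Not at hedge
    exact absurd (hA.apply_add_natCast hedge i m ▸ hi) (hno _ ⟨m, hm₀, hmd, rfl⟩)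

/-- If `u ∈ A_i = A_j`, `A(i,j)` is nonempty and `u` lies in no clique
occurring there, then some clique occurring in `A(i,j)` is a leaf of `T`. -/
theorem eulerTour_gap_contains_leaf [Fintype V] (G : SimpleGraph V) (hG : Chordal G)
    (T : SimpleGraph {C : Set V // IsMaxClique G C}) (hT : IsCliqueTree G T)
    (k : ℕ) (A : ZMod k → {C : Set V // IsMaxClique G C}) (hA : IsEulerTour T k A)
    (u : V) (i j : ZMod k) (hi : u ∈ (A i : Set V)) (hj : u ∈ (A j : Set V))
    (hij : A i = A j) (hne : (cyclicBetween k i j).Nonempty)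
    (hno : ∀ t ∈ cyclicBetween k i j, u ∉ (A t : Set V)) :
    ∃ t ∈ cyclicBetween k i j, IsTreeLeaf T (A t) :=
  eulerTour_gap_contains_leaf_general G T hT k A hA u i j hi hij hne hno
end

section
/- Every chordal graph with independence number at most 3 is a circular-arc graph. -/
/-!
A chordal graph that is not complete has two non-adjacent simplicial vertices `v₁`, `v₂` (Dirac).
Their closed neighbourhoods are cliques, and so is the set of remaining vertices: two non-adjacent
vertices there would form, with `v₁` and `v₂`, an independent set of size four. Colour the three
cliques `0, 1, 2`. As the graph has no induced `4`-cycle, the vertices of colour `k + 1` have nested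
neighbourhoods in colour class `k`, so adjacency between the two classes is a threshold relation
between two counting ranks. A vertex of colour `k` then gets an arc covering the `k`-th third of
the circle, overlapping the previous third by its rank in its own class and the next third by its
number of neighbours there, both scaled by a small `δ`.
-/

open SimpleGraph

variable {V : Type*}

/-- The independence number of `G` is at most `k`. -/
def IndepNumLE (G : SimpleGraph V) (k : ℕ) : Prop :=
  ∀ s : Finset V, (∀ a ∈ s, ∀ b ∈ s, a ≠ b → ¬ G.Adj a b) → s.card ≤ k

/-- The circular arc on the circle `ℝ / ℤ` obtained as the image of the real interval
`[a, b]` under the quotient map. -/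
def arcSet (a b : ℝ) : Set (AddCircle (1 : ℝ)) :=
  (fun t : ℝ => (t : AddCircle (1 : ℝ))) '' Set.Icc a b

/-- `G` is a circular-arc graph: the intersection graph of a family of arcs of a circle. -/
def IsCircularArcGraph (G : SimpleGraph V) : Prop :=
  ∃ s e : V → ℝ, ∀ u v : V, u ≠ v →
    (G.Adj u v ↔ (arcSet (s u) (e u) ∩ arcSet (s v) (e v)).Nonempty)

namespace SimpleGraph

variable {G : SimpleGraph V}

theorem cycleGraph_adj_iff_val {n : ℕ} (hn : 2 ≤ n) {i j : Fin n} :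
    (cycleGraph n).Adj i j ↔ i.val + 1 = j.val ∨ j.val + 1 = i.val ∨
      (i.val = 0 ∧ j.val + 1 = n) ∨ (j.val = 0 ∧ i.val + 1 = n) := by
  have sub_eq_one (a b : Fin n) :
      (a - b).val = 1 ↔ a.val = b.val + 1 ∨ (a.val = 0 ∧ b.val + 1 = n) := by
    rcases le_or_gt b a with h | h
    · have := Fin.sub_val_of_le h
      have : b.val ≤ a.val := h
      omega
    · have := Fin.coe_sub_iff_lt.mpr h
      have : a.val < b.val := h
      omega
  rw [cycleGraph_adj', sub_eq_one, sub_eq_one]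
  omega

theorem adj_or_adj_of_square (h : IsEmpty (cycleGraph 4 ↪g G)) {a b c d : V}
    (hab : G.Adj a b) (hbc : G.Adj b c) (hcd : G.Adj c d) (hda : G.Adj d a) (hac : a ≠ c)
    (hbd : b ≠ d) : G.Adj a c ∨ G.Adj b d := by
  by_contra! hchord
  refine h.false ⟨⟨![a, b, c, d], fun i j hij => ?_⟩, fun {i j} => ?_⟩
  · fin_cases i <;> fin_cases j <;>
      simp_all [hab.ne, hbc.ne, hcd.ne, hda.ne, hab.ne.symm, hbc.ne.symm, hcd.ne.symm, hda.ne.symm]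
  · change G.Adj (![a, b, c, d] i) (![a, b, c, d] j) ↔ _
    fin_cases i <;> fin_cases j <;>
      simp [cycleGraph_adj, hab, hbc, hcd, hda, hab.symm, hbc.symm, hcd.symm, hda.symm, hchord,
        G.adj_comm c a, G.adj_comm d b] <;> decide

theorem Walk.not_adj_getVert_of_length_eq_dist {u v : V} {p : G.Walk u v}
    (hp : p.length = G.dist u v) {i j : ℕ} (hij : i + 1 < j) (hj : j ≤ p.length) :
    ¬ G.Adj (p.getVert i) (p.getVert j) := fun h => by
  have := G.dist_le ((p.take i).append (cons h (p.drop j)))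
  simp only [Walk.length_append, Walk.length_cons, Walk.take_length, Walk.drop_length] at this
  omega

-- `G.induce s` with the vertex type kept, so that walks and reachability stay in `V`.
def restrict (G : SimpleGraph V) (s : Set V) : SimpleGraph V where
  Adj u v := u ∈ s ∧ v ∈ s ∧ G.Adj u v
  symm := ⟨fun _ _ h => ⟨h.2.1, h.1, h.2.2.symm⟩⟩
  loopless := ⟨fun _ h => h.2.2.ne rfl⟩

@[simp]
theorem restrict_adj {s : Set V} {u v : V} :
    (G.restrict s).Adj u v ↔ u ∈ s ∧ v ∈ s ∧ G.Adj u v := Iff.rfl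

theorem restrict_le (s : Set V) : G.restrict s ≤ G := fun _ _ h => h.2.2

theorem restrict_mono {s t : Set V} (h : s ⊆ t) : G.restrict s ≤ G.restrict t :=
  fun _ _ ⟨hu, hv, hadj⟩ => ⟨h hu, h hv, hadj⟩

theorem Walk.support_subset_of_restrict {s : Set V} {u v : V} (p : (G.restrict s).Walk u v)
    (hv : v ∈ s) : ∀ w ∈ p.support, w ∈ s := by
  induction p with
  | nil => simpa using hv
  | cons h _ ih => simpa [(restrict_adj.mp h).1] using ih hv

structure IsSimplicialIn (G : SimpleGraph V) (A : Set V) (v : V) : Prop where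
  mem : v ∈ A
  isClique : G.IsClique (A ∩ G.neighborSet v)

theorem exists_isSimplicialIn_of_isClique_boundary {A B : Finset V} {X : Set V} (hBA : B ⊆ A)
    (hX : G.IsClique X) (hnbhd : ∀ v ∈ B, v ∉ X → ∀ w ∈ A, G.Adj v w → w ∈ B)
    {c : V} (hc : c ∈ B) (hcX : c ∉ X)
    (hB : ¬ G.IsClique (B : Set V) → ∃ v w, G.IsSimplicialIn B v ∧ G.IsSimplicialIn B w ∧
      v ≠ w ∧ ¬ G.Adj v w) :
    ∃ v ∈ B, v ∉ X ∧ G.IsSimplicialIn A v := by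
  have lift (v : V) (hv : v ∈ B) (hvX : v ∉ X) (h : G.IsClique (B ∩ G.neighborSet v)) :
      G.IsSimplicialIn A v := by
    refine ⟨hBA hv, h.subset ?_⟩
    rintro w ⟨hwA, hvw⟩
    exact ⟨hnbhd v hv hvX w hwA hvw, hvw⟩
  by_cases hcl : G.IsClique (B : Set V)
  · exact ⟨c, hc, hcX, lift c hc hcX (hcl.subset Set.inter_subset_left)⟩
  obtain ⟨v, w, hv, hw, hvw, hnadj⟩ := hB hcl
  by_cases hvX : v ∈ X
  · have hwX : w ∉ X := fun hwX => hnadj (hX hvX hwX hvw)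
    exact ⟨w, hw.mem, hwX, lift w hw.mem hwX hw.isClique⟩
  · exact ⟨v, hv.mem, hvX, lift v hv.mem hvX hv.isClique⟩

theorem IsSimplicialIn.isClique_insert_neighborSet {v : V}
    (hv : G.IsSimplicialIn Set.univ v) : G.IsClique (insert v (G.neighborSet v)) :=
  (by simpa using hv.isClique : G.IsClique (G.neighborSet v)).insert fun _ h _ => h

theorem Coloring.adj_of_compl {α : Type*} (c : Gᶜ.Coloring α) {u v : V}
    (huv : u ≠ v) (h : c u = c v) : G.Adj u v :=
  by_contra fun hn => c.valid ((G.compl_adj u v).mpr ⟨huv, hn⟩) h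

end SimpleGraph

open SimpleGraph

variable {G : SimpleGraph V}

theorem Chordal.exists_chord (hG : Chordal G) {u v : V} {p : G.Walk u v} (hp : p.IsPath)
    (hlen : 3 ≤ p.length) (hvu : G.Adj v u) :
    ∃ i j, i + 1 < j ∧ j ≤ p.length ∧ ¬ (i = 0 ∧ j = p.length) ∧
      G.Adj (p.getVert i) (p.getVert j) := by
  by_contra! hchord
  have hinj : Function.Injective fun i : Fin (p.length + 1) => p.getVert i :=
    fun i j h => Fin.ext (hp.getVert_injOn (by simp; omega) (by simp; omega) h)
  refine (hG (p.length + 1) (by omega)).false ⟨⟨_, hinj⟩, fun {i j} => ?_⟩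
  simp only [Function.Embedding.coeFn_mk, cycleGraph_adj_iff_val (by omega : 2 ≤ p.length + 1)]
  have hi := i.isLt
  have hj := j.isLt
  have chord_ends (a b : ℕ) (hab : a < b) (hb : b ≤ p.length)
      (h : G.Adj (p.getVert a) (p.getVert b)) : a + 1 = b ∨ (a = 0 ∧ b = p.length) := by
    by_contra! hne
    exact hchord a b (by omega) hb hne.2 h
  constructor
  · intro h
    rcases lt_trichotomy i.val j.val with hij | hij | hij
    · have := chord_ends _ _ hij (by omega) h; omega
    · exact (h.ne (congrArg _ hij)).elim
    · have := chord_ends _ _ hij (by omega) h.symm; omega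
  · rintro (h | h | ⟨h0, h1⟩ | ⟨h0, h1⟩)
    · rw [← h]; exact p.adj_getVert_succ (by omega)
    · rw [← h]; exact (p.adj_getVert_succ (by omega)).symm
    · rw [h0, show j.val = p.length by omega, p.getVert_zero, p.getVert_length]; exact hvu.symm
    · rw [h0, show i.val = p.length by omega, p.getVert_zero, p.getVert_length]; exact hvu

theorem Chordal.adj_of_reachable_outside_nbhd (hG : Chordal G) {x z z' : V}
    (hz : G.Adj x z) (hz' : G.Adj x z') (hne : z ≠ z')
    (hr : (G.restrict {v | v = z ∨ v = z' ∨ (v ≠ x ∧ ¬ G.Adj x v)}).Reachable z z') :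
    G.Adj z z' := by
  by_contra hnadj
  set T : Set V := {v | v = z ∨ v = z' ∨ (v ≠ x ∧ ¬ G.Adj x v)}
  obtain ⟨p, hp, hlen⟩ := hr.exists_path_of_dist
  have hlen2 : 1 < p.length :=
    hlen ▸ hr.one_lt_dist_of_ne_of_not_adj hne fun h => hnadj (restrict_adj.mp h).2.2
  have hT := p.support_subset_of_restrict (Or.inr (Or.inl rfl))
  have hxT : x ∉ T := by
    rintro (h | h | h)
    exacts [hz.ne h, hz'.ne h, h.1 rfl]
  have hinterior (i : ℕ) (h0 : 0 < i) (hi : i < p.length) : ¬ G.Adj x (p.getVert i) := by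
    have hne (m : ℕ) (hm : m ≤ p.length) (him : i ≠ m) : p.getVert i ≠ p.getVert m :=
      hp.getVert_injOn.ne (by simp; omega) (by simpa using hm) him
    rcases hT _ (p.getVert_mem_support i) with h | h | h
    · exact absurd (h.trans p.getVert_zero.symm) (hne 0 (by omega) (by omega))
    · exact absurd (h.trans p.getVert_length.symm) (hne _ le_rfl (by omega))
    · exact h.2
  have hW : (Walk.cons hz (p.mapLe (restrict_le T))).IsPath := by
    refine (Walk.cons_isPath_iff _ _).mpr ⟨hp.mapLe _, fun hx => hxT (hT x ?_)⟩
    simpa using hx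
  obtain ⟨i, j, hij, hj, hend, hadj⟩ := hG.exists_chord hW (by simp; omega) hz'.symm
  simp only [Walk.length_cons, Walk.length_mapLe] at hj hend
  obtain ⟨j, rfl⟩ : ∃ j', j = j' + 1 := ⟨j - 1, by omega⟩
  rw [Walk.getVert_cons_succ] at hadj
  rcases i with _ | i
  · exact hinterior j (by omega) (by omega) (by simpa using hadj)
  · rw [Walk.getVert_cons_succ] at hadj
    refine p.not_adj_getVert_of_length_eq_dist hlen (i := i) (j := j) (by omega) (by omega)
      (restrict_adj.mpr ⟨hT _ (p.getVert_mem_support i), hT _ (p.getVert_mem_support j), ?_⟩)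
    simpa using hadj

theorem Chordal.exists_isSimplicialIn_pair (hG : Chordal G) (A : Finset V)
    (hA : ¬ G.IsClique (A : Set V)) :
    ∃ v w, G.IsSimplicialIn A v ∧ G.IsSimplicialIn A w ∧ v ≠ w ∧ ¬ G.Adj v w := by
  classical
  induction A using Finset.strongInduction with
  | H A ih =>
  obtain ⟨x, hx, y, hy, hxy, hnxy⟩ : ∃ x ∈ A, ∃ y ∈ A, x ≠ y ∧ ¬ G.Adj x y := by
    simpa [IsClique, Set.Pairwise] using hA
  -- `C` is the component of `y` outside the closed neighbourhood of `x` and `X` its boundary in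
  -- `A`: a separator lying in the neighbourhood of `x`, hence a clique.
  set S : Set V := {v | v ∈ A ∧ v ≠ x ∧ ¬ G.Adj x v}
  set C : Set V := {v | (G.restrict S).Reachable y v}
  set X : Set V := {z | z ∈ A ∧ z ∉ C ∧ ∃ u ∈ C, G.Adj u z}
  have hyS : y ∈ S := ⟨hy, hxy.symm, hnxy⟩
  have hyC : y ∈ C := Reachable.refl y
  have hCS : C ⊆ S := fun v ⟨p⟩ => p.reverse.support_subset_of_restrict hyS v (by simp)
  have hXx : ∀ z ∈ X, G.Adj x z := by
    rintro z ⟨hzA, hzC, u, hu, huz⟩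
    by_contra hxz
    have hzx : z ≠ x := fun h => (hCS hu).2.2 (by rw [← h]; exact huz.symm)
    exact hzC (Reachable.trans hu (restrict_adj.mpr ⟨hCS hu, ⟨hzA, hzx, hxz⟩, huz⟩).reachable)
  have hX : G.IsClique X := by
    intro z hz z' hz' hne
    obtain ⟨u, hu, huz⟩ := hz.2.2
    obtain ⟨u', hu', huz'⟩ := hz'.2.2
    refine hG.adj_of_reachable_outside_nbhd (hXx z hz) (hXx z' hz') hne ?_
    set T : Set V := {v | v = z ∨ v = z' ∨ (v ≠ x ∧ ¬ G.Adj x v)}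
    have hST : S ⊆ T := fun v hv => Or.inr (Or.inr hv.2)
    have hzu : (G.restrict T).Adj z u := ⟨Or.inl rfl, hST (hCS hu), huz.symm⟩
    have huz' : (G.restrict T).Adj u' z' := ⟨hST (hCS hu'), Or.inr (Or.inl rfl), huz'⟩
    exact hzu.reachable.trans
      ((((Reachable.symm hu).trans hu').mono (restrict_mono hST)).trans huz'.reachable)
  have hxC : x ∉ C := fun h => (hCS h).2.1 rfl
  obtain ⟨v, hvB, hvX, hv⟩ := exists_isSimplicialIn_of_isClique_boundary
    (B := A.filter (· ∈ C ∪ X)) (Finset.filter_subset _ A) hX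
    (fun v hv hvX w hwA hvw => by
      have hvC : v ∈ C := ((Finset.mem_filter.mp hv).2).resolve_right hvX
      by_cases hwC : w ∈ C
      · exact Finset.mem_filter.mpr ⟨hwA, Or.inl hwC⟩
      · exact Finset.mem_filter.mpr ⟨hwA, Or.inr ⟨hwA, hwC, v, hvC, hvw⟩⟩)
    (c := y) (Finset.mem_filter.mpr ⟨hy, Or.inl hyC⟩) (fun h => h.2.1 hyC)
    (ih _ (Finset.filter_ssubset.mpr ⟨x, hx, fun h => h.elim hxC fun h => (hXx x h).ne rfl⟩))
  obtain ⟨w, hwB, hwX, hw⟩ := exists_isSimplicialIn_of_isClique_boundary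
    (B := A.filter (· ∉ C)) (Finset.filter_subset _ A) hX
    (fun v hv hvX w hwA hvw => by
      obtain ⟨hvA, hvC⟩ := Finset.mem_filter.mp hv
      exact Finset.mem_filter.mpr ⟨hwA, fun hwC => hvX ⟨hvA, hvC, w, hwC, hvw.symm⟩⟩)
    (c := x) (Finset.mem_filter.mpr ⟨hx, hxC⟩) (fun h => (hXx x h).ne rfl)
    (ih _ (Finset.filter_ssubset.mpr ⟨y, hy, not_not.mpr hyC⟩))
  have hvC : v ∈ C := ((Finset.mem_filter.mp hvB).2).resolve_right hvX
  obtain ⟨hwA, hwC⟩ := Finset.mem_filter.mp hwB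
  exact ⟨v, w, hv, hw, fun h => hwC (h ▸ hvC), fun hvw => hwX ⟨hwA, hwC, v, hvC, hvw⟩⟩

theorem Chordal.colorable_compl_three [Fintype V] (hG : Chordal G) (hα : IndepNumLE G 3) :
    Gᶜ.Colorable 3 := by
  classical
  by_cases hcl : G.IsClique (Set.univ : Set V)
  · refine ⟨Coloring.mk (fun _ => (0 : Fin 3)) fun {u w} h => ?_⟩
    rw [compl_adj] at h
    exact (h.2 (hcl trivial trivial h.1)).elim
  obtain ⟨v₁, v₂, h₁, h₂, hne, hnadj⟩ :=
    hG.exists_isSimplicialIn_pair Finset.univ (by simpa using hcl)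
  rw [Finset.coe_univ] at h₁ h₂
  set N₁ := insert v₁ (G.neighborSet v₁)
  set N₂ := insert v₂ (G.neighborSet v₂)
  have hR : G.IsClique {u | u ∉ N₁ ∧ u ∉ N₂} := by
    rintro u ⟨hu₁, hu₂⟩ w ⟨hw₁, hw₂⟩ huw
    by_contra huw'
    simp only [N₁, N₂, Set.mem_insert_iff, mem_neighborSet, not_or] at hu₁ hu₂ hw₁ hw₂
    have := hα {v₁, v₂, u, w} (by
      simp only [Finset.mem_insert, Finset.mem_singleton]
      rintro a (rfl | rfl | rfl | rfl) b (rfl | rfl | rfl | rfl) hab <;>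
        simp_all [G.adj_comm])
    rw [Finset.card_eq_four.mpr ⟨v₁, v₂, u, w, hne, Ne.symm hu₁.1, Ne.symm hw₁.1,
      Ne.symm hu₂.1, Ne.symm hw₂.1, huw, rfl⟩] at this
    omega
  refine ⟨Coloring.mk (fun u => if u ∈ N₁ then (0 : Fin 3) else if u ∈ N₂ then 1 else 2) ?_⟩
  intro u w h heq
  rw [compl_adj] at h
  apply h.2
  split_ifs at heq <;> first
    | exact h₁.isClique_insert_neighborSet (by assumption) (by assumption) h.1
    | exact h₂.isClique_insert_neighborSet (by assumption) (by assumption) h.1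
    | exact hR ⟨by assumption, by assumption⟩ ⟨by assumption, by assumption⟩ h.1
    | simp at heq

open Classical Finset in
theorem rel_iff_card_le_card_of_nested {α β : Type*} [Fintype β] (P : α → Prop) (Q : β → Prop)
    (R : α → β → Prop)
    (hnest : ∀ b b', Q b → Q b' → (∀ a, P a → R a b → R a b') ∨ (∀ a, P a → R a b' → R a b))
    {a : α} {b : β} (ha : P a) (hb : Q b) :
    R a b ↔ #{b' | Q b' ∧ ∀ a', P a' → R a' b → R a' b'} ≤ #{b' | Q b' ∧ R a b'} := by
  constructor
  · exact fun h => Finset.card_le_card fun b' hb' => by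
      simp only [Finset.mem_filter, Finset.mem_univ, true_and] at hb' ⊢
      exact ⟨hb'.1, hb'.2 a ha h⟩
  · intro hle
    by_contra h
    refine hle.not_gt (Finset.card_lt_card ⟨fun b' hb' => ?_, fun hsub => ?_⟩)
    · simp only [Finset.mem_filter, Finset.mem_univ, true_and] at hb' ⊢
      refine ⟨hb'.1, (hnest b b' hb hb'.1).resolve_right fun hle' => h (hle' a ha hb'.2)⟩
    · have := hsub (by simp [hb] : b ∈ _)
      simp only [Finset.mem_filter, Finset.mem_univ, true_and] at this
      exact h this.2

open Classical Finset in
/-- Having no induced square, `G` gives the vertices of colour `c v` nested neighbourhoods in the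
class of colour `c u`, so adjacency between the two classes is a threshold relation between these
two counts. -/
theorem SimpleGraph.Coloring.adj_iff_card_le_card [Fintype V] (hC4 : IsEmpty (cycleGraph 4 ↪g G))
    (c : Gᶜ.Coloring (Fin 3)) {u v : V} (huv : c v = c u + 1) :
    G.Adj u v ↔ #{w | c w = c v ∧ ∀ a, c a + 1 = c v → G.Adj a v → G.Adj a w} ≤
      #{w | c w = c u + 1 ∧ G.Adj u w} := by
  have succ_ne (i : Fin 3) : i + 1 ≠ i := by decide +revert
  rw [← huv]
  convert rel_iff_card_le_card_of_nested (fun a => c a + 1 = c v) (fun b => c b = c v) G.Adj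
    (fun b b' hb hb' => ?_) huv.symm rfl
  by_contra! ⟨⟨a, ha, hab, hab'⟩, ⟨a', ha', ha'b', ha'b⟩⟩
  have hbb' : G.Adj b b' := c.adj_of_compl (by rintro rfl; exact hab' hab) (hb.trans hb'.symm)
  have ha'a : G.Adj a' a :=
    c.adj_of_compl (by rintro rfl; exact ha'b hab) (add_right_cancel (ha'.trans ha.symm))
  rcases adj_or_adj_of_square hC4 hab hbb' ha'b'.symm ha'a
    (fun h => succ_ne (c a) (by rw [ha, ← hb', h]))
    (fun h => succ_ne (c a') (by rw [ha', ← hb, h])) with h | h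
  exacts [hab' h, ha'b h.symm]

theorem arcSet_add_one (a b : ℝ) : arcSet (a + 1) (b + 1) = arcSet a b := by
  rw [arcSet, arcSet, ← Set.image_add_const_Icc, Set.image_image]
  simp

theorem arcSet_inter_nonempty_iff {a b c d : ℝ} (hab : a ≤ b) (hcd : c ≤ d) (hbc : b - c < 1)
    (hda : d - a < 1) : (arcSet a b ∩ arcSet c d).Nonempty ↔ c ≤ b ∧ a ≤ d := by
  constructor
  · rintro ⟨_, ⟨t, ht, rfl⟩, t', ht', heq⟩
    beta_reduce at heq
    obtain ⟨n, hn⟩ := (AddCircle.coe_eq_zero_iff 1).mp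
      (by rw [AddCircle.coe_sub, heq, sub_self] : ((t' - t : ℝ) : AddCircle (1 : ℝ)) = 0)
    rw [zsmul_one] at hn
    have h1 : n < 1 := by exact_mod_cast (by linarith [ht.1, ht'.2] : (n : ℝ) < 1)
    have h2 : -1 < n := by exact_mod_cast (by linarith [ht.2, ht'.1] : (-1 : ℝ) < n)
    obtain rfl : n = 0 := by omega
    simp only [Int.cast_zero] at hn
    exact ⟨by linarith [ht.2, ht'.1], by linarith [ht.1, ht'.2]⟩
  · rintro ⟨hcb, had⟩
    exact ⟨_, ⟨max a c, ⟨le_max_left _ _, max_le hab hcb⟩, rfl⟩,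
      ⟨max a c, ⟨le_max_right _ _, max_le had hcd⟩, rfl⟩⟩

/-- The arc `[k/3 + β, (k+1)/3 + α]`: for `β, α ∈ [0, 1/3)` it covers the `k`-th third of the
circle and overlaps the neighbouring thirds by `β` and `α`. -/
def thirdArc (k β α : ℝ) : Set (AddCircle (1 : ℝ)) :=
  arcSet (k / 3 + β) ((k + 1) / 3 + α)

theorem thirdArc_add_three (k β α : ℝ) : thirdArc (k + 3) β α = thirdArc k β α := by
  rw [thirdArc, thirdArc, ← arcSet_add_one (k / 3 + β)]
  congr 1 <;> ring

theorem thirdArc_inter_nonempty (k : ℝ) {β α β' α' : ℝ} (hβ : β ∈ Set.Ico 0 (1 / 3))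
    (hα : α ∈ Set.Ico 0 (1 / 3)) (hβ' : β' ∈ Set.Ico 0 (1 / 3)) (hα' : α' ∈ Set.Ico 0 (1 / 3)) :
    (thirdArc k β α ∩ thirdArc k β' α').Nonempty := by
  obtain ⟨_, _⟩ := hβ; obtain ⟨_, _⟩ := hα; obtain ⟨_, _⟩ := hβ'; obtain ⟨_, _⟩ := hα'
  rw [thirdArc, thirdArc,
    arcSet_inter_nonempty_iff (by linarith) (by linarith) (by linarith) (by linarith)]
  exact ⟨by linarith, by linarith⟩

theorem thirdArc_inter_thirdArc_add_one_iff (k : ℝ) {β α β' α' : ℝ}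
    (hβ : β ∈ Set.Ico 0 (1 / 3)) (hα : α ∈ Set.Ico 0 (1 / 3)) (hβ' : β' ∈ Set.Ico 0 (1 / 3))
    (hα' : α' ∈ Set.Ico 0 (1 / 3)) :
    (thirdArc k β α ∩ thirdArc (k + 1) β' α').Nonempty ↔ β' ≤ α := by
  obtain ⟨_, _⟩ := hβ; obtain ⟨_, _⟩ := hα; obtain ⟨_, _⟩ := hβ'; obtain ⟨_, _⟩ := hα'
  rw [thirdArc, thirdArc,
    arcSet_inter_nonempty_iff (by linarith) (by linarith) (by linarith) (by linarith)]
  exact ⟨fun h => by linarith [h.1], fun h => ⟨by linarith, by linarith⟩⟩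

open Classical Finset in
theorem isCircularArcGraph_of_colorable_compl_three [Fintype V]
    (hC4 : IsEmpty (cycleGraph 4 ↪g G)) (hcol : Gᶜ.Colorable 3) : IsCircularArcGraph G := by
  obtain ⟨c⟩ := hcol
  set δ : ℝ := 1 / (3 * (Fintype.card V + 1))
  have hδ : 0 < δ := by positivity
  have small (s : Finset V) : #s * δ ∈ Set.Ico (0 : ℝ) (1 / 3) := by
    refine ⟨by positivity, ?_⟩
    have : (#s : ℝ) < Fintype.card V + 1 := by exact_mod_cast Nat.lt_succ_of_le s.card_le_univ
    calc (#s : ℝ) * δ < (Fintype.card V + 1) * δ := by gcongr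
      _ = 1 / 3 := by simp only [δ]; field_simp
  set β : V → ℝ := fun v => #{w | c w = c v ∧ ∀ a, c a + 1 = c v → G.Adj a v → G.Adj a w} * δ
  set α : V → ℝ := fun v => #{w | c w = c v + 1 ∧ G.Adj v w} * δ
  set k : V → ℝ := fun v => ((c v : ℕ) : ℝ)
  have hβ (v : V) : β v ∈ Set.Ico 0 (1 / 3) := small _
  have hα (v : V) : α v ∈ Set.Ico 0 (1 / 3) := small _
  have hsucc (u v : V) (huv : c v = c u + 1) :
      G.Adj u v ↔ (thirdArc (k u) (β u) (α u) ∩ thirdArc (k v) (β v) (α v)).Nonempty := by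
    rw [c.adj_iff_card_le_card hC4 huv, ← Nat.cast_le (α := ℝ), ← mul_le_mul_iff_left₀ hδ]
    obtain hk | ⟨hku, hkv⟩ : k v = k u + 1 ∨ (k u = 2 ∧ k v = 0) := by
      simp only [k, huv]
      generalize c u = i
      fin_cases i <;> norm_num [Fin.val_add]
    · rw [hk]
      exact (thirdArc_inter_thirdArc_add_one_iff _ (hβ u) (hα u) (hβ v) (hα v)).symm
    · rw [hku, hkv, ← thirdArc_add_three 0, show (0 : ℝ) + 3 = 2 + 1 by norm_num]
      exact (thirdArc_inter_thirdArc_add_one_iff _ (hβ u) (hα u) (hβ v) (hα v)).symm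
  refine ⟨fun v => k v / 3 + β v, fun v => (k v + 1) / 3 + α v, fun u v huv => ?_⟩
  change G.Adj u v ↔ (thirdArc (k u) (β u) (α u) ∩ thirdArc (k v) (β v) (α v)).Nonempty
  rcases (by generalize c u = a; generalize c v = b; decide +revert :
      c u = c v ∨ c v = c u + 1 ∨ c u = c v + 1) with h | h | h
  · rw [show k v = k u by simp only [k, h]]
    exact iff_of_true (c.adj_of_compl huv h)
      (thirdArc_inter_nonempty _ (hβ u) (hα u) (hβ v) (hα v))
  · exact hsucc u v h
  · rw [G.adj_comm, Set.inter_comm]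
    exact hsucc v u h

/-- Every chordal graph with independence number at most 3 is a
circular-arc graph. -/
theorem chordal_indepLE_three_circularArc [Fintype V] (G : SimpleGraph V)
    (hG : Chordal G) (hα : IndepNumLE G 3) : IsCircularArcGraph G :=
  isCircularArcGraph_of_colorable_compl_three (hG 4 le_rfl) (hG.colorable_compl_three hα)
end

section
/- Let G be a graph with a circular-arc representation in which the arcs of four vertices x, y, z, w appear in this circular order around the circle. Then no x-z path of G is missed by both y and w, and no y-w path of G is missed by both x and z; in particular, x,z do not avoid y,w. -/
open SimpleGraph

variable {V : Type*}

lemma coe_toIcoMod' (a b : ℝ) :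
    ((toIcoMod one_pos a b : ℝ) : AddCircle (1:ℝ)) = (b : AddCircle (1:ℝ)) := by
  conv_rhs => rw [← toIcoMod_add_toIcoDiv_zsmul one_pos a b]
  simp [QuotientAddGroup.mk_add]

lemma coe_add_one' (a : ℝ) :
    ((a + 1 : ℝ) : AddCircle (1:ℝ)) = (a : AddCircle (1:ℝ)) := by
  have := AddCircle.coe_period (p := (1:ℝ))
  rw [QuotientAddGroup.mk_add, this, add_zero]

lemma circle_sep {a b : ℝ} (hab : a < b) (hb : b < a + 1)
    {U : Set (AddCircle (1:ℝ))} (hU : IsPreconnected U)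
    (haU : (a : AddCircle (1:ℝ)) ∉ U) (hbU : (b : AddCircle (1:ℝ)) ∉ U)
    {c d : ℝ} (hc : c ∈ Set.Ioo a b) (hd : d ∈ Set.Ioo b (a+1))
    (hcU : (c : AddCircle (1:ℝ)) ∈ U) (hdU : (d : AddCircle (1:ℝ)) ∈ U) : False := by
  haveI : Fact ((0:ℝ) < 1) := ⟨one_pos⟩
  set f : ℝ → AddCircle (1:ℝ) := fun t => (t : AddCircle (1:ℝ)) with hf
  have hopen : IsOpenMap f := QuotientAddGroup.isOpenMap_coe
  set A : Set (AddCircle (1:ℝ)) := f '' Set.Ioo a b with hA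
  set B : Set (AddCircle (1:ℝ)) := f '' Set.Ioo b (a+1) with hB
  have hAB : ∀ q ∈ A, q ∉ B := by
    rintro q ⟨r1, hr1, rfl⟩ ⟨r2, hr2, hq⟩
    have h1 : r1 ∈ Set.Ico a (a + 1) := ⟨hr1.1.le, hr1.2.trans hb⟩
    have h2 : r2 ∈ Set.Ico a (a + 1) := ⟨(hab.trans hr2.1).le, hr2.2⟩
    have := (AddCircle.coe_eq_coe_iff_of_mem_Ico h2 h1).mp hq
    exact absurd (this ▸ hr2.1) (not_lt.mpr hr1.2.le)
  have hcover : U ⊆ A ∪ B := by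
    intro q hq
    obtain ⟨r, rfl⟩ := Quotient.exists_rep q
    have : (Quotient.mk _ r : AddCircle (1:ℝ)) = ((r : ℝ) : AddCircle (1:ℝ)) := rfl
    rw [this] at hq ⊢
    set r' := toIcoMod one_pos a r with hr'
    have hmem : r' ∈ Set.Ico a (a+1) := toIcoMod_mem_Ico one_pos a r
    have hcoe : ((r' : ℝ) : AddCircle (1:ℝ)) = (r : AddCircle (1:ℝ)) := coe_toIcoMod' a r
    rcases eq_or_lt_of_le hmem.1 with h | h
    · exact absurd hq (by rw [← hcoe, ← h]; exact haU)
    rcases lt_trichotomy r' b with h2 | h2 | h2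
    · exact Or.inl ⟨r', ⟨h, h2⟩, hcoe⟩
    · exact absurd hq (by rw [← hcoe, h2]; exact hbU)
    · exact Or.inr ⟨r', ⟨h2, hmem.2⟩, hcoe⟩
  obtain ⟨q, -, hqA, hqB⟩ := hU A B (hopen _ isOpen_Ioo) (hopen _ isOpen_Ioo) hcover
    ⟨_, hcU, ⟨c, hc, rfl⟩⟩ ⟨_, hdU, ⟨d, hd, rfl⟩⟩
  exact hAB q hqA hqB

lemma walk_union_preconnected (G : SimpleGraph V) (s e : V → ℝ)
    (hrep : ∀ u v : V, u ≠ v →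
      (G.Adj u v ↔ (arcSet (s u) (e u) ∩ arcSet (s v) (e v)).Nonempty))
    {a b : V} (p : G.Walk a b) :
    IsPreconnected (⋃ u ∈ p.support, arcSet (s u) (e u)) := by
  induction p with
  | nil =>
    simp only [Walk.support_nil, List.mem_singleton, Set.iUnion_iUnion_eq_left]
    exact (isPreconnected_Icc).image _ ((AddCircle.continuous_mk' 1).continuousOn)
  | cons h' q ih =>
    simp only [Walk.support_cons, List.mem_cons, Set.iUnion_iUnion_eq_or_left]
    obtain ⟨pt, hpt1, hpt2⟩ := (hrep _ _ h'.ne).mp h'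
    refine IsPreconnected.union pt hpt1 ?_
      ((isPreconnected_Icc).image _ ((AddCircle.continuous_mk' 1).continuousOn)) ih
    exact Set.mem_biUnion q.start_mem_support hpt2

lemma key_lemma (G : SimpleGraph V) (s e : V → ℝ)
    (hrep : ∀ u v : V, u ≠ v →
      (G.Adj u v ↔ (arcSet (s u) (e u) ∩ arcSet (s v) (e v)).Nonempty))
    (x y z w : V) (t1 t2 t3 t4 : ℝ)
    (h12 : t1 < t2) (h23 : t2 < t3) (h34 : t3 < t4) (h41 : t4 < t1 + 1)
    (hx : (t1 : AddCircle (1 : ℝ)) ∈ arcSet (s x) (e x))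
    (hy : (t2 : AddCircle (1 : ℝ)) ∈ arcSet (s y) (e y))
    (hz : (t3 : AddCircle (1 : ℝ)) ∈ arcSet (s z) (e z))
    (hw : (t4 : AddCircle (1 : ℝ)) ∈ arcSet (s w) (e w))
    (p : G.Walk x z) : ¬ (Misses G y p ∧ Misses G w p) := by
  rintro ⟨⟨hy1, hy2⟩, ⟨hw1, hw2⟩⟩
  set U := ⋃ u ∈ p.support, arcSet (s u) (e u) with hUdef
  have hUconn : IsPreconnected U := walk_union_preconnected G s e hrep p
  have h1U : (t1 : AddCircle (1:ℝ)) ∈ U := Set.mem_biUnion p.start_mem_support hx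
  have h3U : (t3 : AddCircle (1:ℝ)) ∈ U := Set.mem_biUnion p.end_mem_support hz
  have havoid : ∀ (v : V) (t : ℝ), v ∉ p.support → (∀ u ∈ p.support, ¬ G.Adj v u) →
      (t : AddCircle (1:ℝ)) ∈ arcSet (s v) (e v) → (t : AddCircle (1:ℝ)) ∉ U := by
    intro v t hv hadj ht hmem
    obtain ⟨u, hu, htu⟩ := Set.mem_iUnion₂.mp hmem
    have hne : v ≠ u := fun hvu => hv (hvu ▸ hu)
    exact hadj u hu ((hrep v u hne).mpr ⟨_, ht, htu⟩)
  have h2U : (t2 : AddCircle (1:ℝ)) ∉ U := havoid y t2 hy1 hy2 hy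
  have h4U : (t4 : AddCircle (1:ℝ)) ∉ U := havoid w t4 hw1 hw2 hw
  refine circle_sep (a := t2) (b := t4) (h23.trans h34) (h41.trans (by linarith))
    hUconn h2U h4U (c := t3) ⟨h23, h34⟩ (d := t1 + 1) ⟨h41, by linarith⟩ h3U ?_
  rw [coe_add_one']; exact h1U

/-- If the arcs of `x, y, z, w` are pairwise disjoint and appear in
this circular order in a circular-arc representation of `G`, then no `x–z` path of `G`
is missed by both `y` and `w`, no `y–w` path is missed by both `x` and `z`, and in
particular `x, z` do not avoid `y, w`. -/
theorem circular_order_blocks_paths [Fintype V] (G : SimpleGraph V) (s e : V → ℝ)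
    (hrep : ∀ u v : V, u ≠ v →
      (G.Adj u v ↔ (arcSet (s u) (e u) ∩ arcSet (s v) (e v)).Nonempty))
    (x y z w : V) (t1 t2 t3 t4 : ℝ)
    (h12 : t1 < t2) (h23 : t2 < t3) (h34 : t3 < t4) (h41 : t4 < t1 + 1)
    (hx : (t1 : AddCircle (1 : ℝ)) ∈ arcSet (s x) (e x))
    (hy : (t2 : AddCircle (1 : ℝ)) ∈ arcSet (s y) (e y))
    (hz : (t3 : AddCircle (1 : ℝ)) ∈ arcSet (s z) (e z))
    (hw : (t4 : AddCircle (1 : ℝ)) ∈ arcSet (s w) (e w))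
    (hdisj : List.Pairwise (fun a b => Disjoint (arcSet (s a) (e a)) (arcSet (s b) (e b)))
      [x, y, z, w]) :
    (∀ p : G.Walk x z, p.IsPath → ¬ (Misses G y p ∧ Misses G w p)) ∧
    (∀ p : G.Walk y w, p.IsPath → ¬ (Misses G x p ∧ Misses G z p)) ∧
    ¬ Avoids G x z y w := by
  have part1 : ∀ p : G.Walk x z, ¬ (Misses G y p ∧ Misses G w p) :=
    key_lemma G s e hrep x y z w t1 t2 t3 t4 h12 h23 h34 h41 hx hy hz hw
  have part2 : ∀ p : G.Walk y w, ¬ (Misses G z p ∧ Misses G x p) := by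
    refine key_lemma G s e hrep y z w x t2 t3 t4 (t1+1) h23 h34 h41 (by linarith)
      hy hz hw ?_
    rw [coe_add_one']; exact hx
  refine ⟨fun p _ => part1 p, fun p _ h => part2 p ⟨h.2, h.1⟩, ?_⟩
  rintro (⟨p, hp, h1, h2⟩ | ⟨p, hp, h1, h2⟩)
  · exact part1 p ⟨h1, h2⟩
  · exact part2 p ⟨h2, h1⟩
end
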